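/- Let g = 2k be even and h ∈ {1,2}, and write δ_h = (−1)^{h+1}. Then: (i) for 1 ≤ i < k, ν_{ik,h}(a_{k,h}) = a_{k,h}² (a_{i,h} − a_{k,h}) ∏_{ℓ≠i,k}(a_{k,h} − a_{ℓ,h})², and ν'_{ik,h}(a_{k,h}) = 2 a_{k,h} (a_{i,h} − a_{k,h}) ∏_{ℓ≠i,k}(a_{k,h} − a_{ℓ,h}) · (∏_{ℓ≠i,k}(a_{k,h} − a_{ℓ,h}) + a_{k,h} ∑_{m≠i,k} ∏_{ℓ≠i,k,m}(a_{k,h} − a_{ℓ,h})); (ii) for k < j ≤ g−1, ν_{kj,h}(a_{k,h}) = δ_h (a_{k,h} a_{j,h}/A_2)(a_{k,h} − a_{j,h}) ∏_{ℓ≠k,j}(a_{k,h} − a_{ℓ,h})², and ν'_{kj,h}(a_{k,h}) = δ_h (2 a_{k,h} a_{j,h}/A_2)(a_{k,h} − a_{j,h}) ∏_{ℓ≠k,j}(a_{k,h} − a_{ℓ,h}) · ∑_{m≠k,j} ∏_{ℓ≠k,j,m}(a_{k,h} − a_{ℓ,h}). All index ranges are over {1, …, g−1}. -/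

import Mathlib

open Polynomial Finset

/-- `A_h = ∏_{i=1}^{g-1} a_{i,h}`. -/
noncomputable def Aprod (g : ℕ) (a : ℕ → ℕ → ℂ) (h : ℕ) : ℂ :=
  ∏ i ∈ Finset.Icc 1 (g - 1), a i h

/-- `d_2 = 1`, `d_1 = -A_1/A_2`. -/
noncomputable def dcoef (g : ℕ) (a : ℕ → ℕ → ℂ) (h : ℕ) : ℂ :=
  if h = 1 then -Aprod g a 1 / Aprod g a 2 else 1

/-- The polynomial `α_{i,h}`: for `1 ≤ i ≤ k = ⌊g/2⌋`,
`α_{i,h}(t) = t·∏_{r≠i}(t − a_{r,h})`; for `k+1 ≤ i ≤ g−1`,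
`α_{i,h}(t) = −(d_h a_{i,h}/A_h)·∏_{r≠i}(t − a_{r,h})`. -/
noncomputable def alphaPoly (g : ℕ) (a : ℕ → ℕ → ℂ) (i h : ℕ) : Polynomial ℂ :=
  if i ≤ g / 2 then
    X * ∏ r ∈ (Finset.Icc 1 (g - 1)).erase i, (X - C (a r h))
  else
    C (-(dcoef g a h * a i h / Aprod g a h)) *
      ∏ r ∈ (Finset.Icc 1 (g - 1)).erase i, (X - C (a r h))

/-- Wronskian `ν_{ij,h} = α_{i,h} α'_{j,h} − α_{j,h} α'_{i,h}`. -/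
noncomputable def nuPoly (g : ℕ) (a : ℕ → ℕ → ℂ) (i j h : ℕ) : Polynomial ℂ :=
  alphaPoly g a i h * derivative (alphaPoly g a j h)
    - alphaPoly g a j h * derivative (alphaPoly g a i h)

/-- Torsion values: for `1 ≤ m ≤ g` (with the convention `a_{g,h} = 0`),
`τ_{ij,m} = α'_{j,1}(a_{m,1})·α'_{i,2}(a_{m,2}) − α'_{i,1}(a_{m,1})·α'_{j,2}(a_{m,2})`;
for `m = g+1`, `τ_{ij,g+1} = c_{j,1}c_{i,2} − c_{i,1}c_{j,2}` where `c_{i,h}` is the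
coefficient of `t^{g-2}` in `α_{i,h}`. -/
noncomputable def tauVal (g : ℕ) (a : ℕ → ℕ → ℂ) (i j m : ℕ) : ℂ :=
  if m ≤ g then
    (derivative (alphaPoly g a j 1)).eval (if m = g then 0 else a m 1) *
        (derivative (alphaPoly g a i 2)).eval (if m = g then 0 else a m 2)
      - (derivative (alphaPoly g a i 1)).eval (if m = g then 0 else a m 1) *
        (derivative (alphaPoly g a j 2)).eval (if m = g then 0 else a m 2)
  else
    (alphaPoly g a j 1).coeff (g - 2) * (alphaPoly g a i 2).coeff (g - 2)
      - (alphaPoly g a i 1).coeff (g - 2) * (alphaPoly g a j 2).coeff (g - 2)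

/-- The `(5g−5) × ((g−1)(g−2)/2)` Gaussian matrix: the column indexed by the pair
`(i,j)`, `1 ≤ i < j ≤ g−1`, consists of the `2g−3` coefficients of `ν_{ij,1}`, the
`2g−3` coefficients of `ν_{ij,2}`, and then `τ_{ij,1}, …, τ_{ij,g+1}`. -/
noncomputable def gaussMatrix (g : ℕ) (a : ℕ → ℕ → ℂ) :
    Matrix (Fin (5 * g - 5))
      {p : Fin g × Fin g // 1 ≤ (p.1 : ℕ) ∧ (p.1 : ℕ) < (p.2 : ℕ)} ℂ :=
  fun r p =>
    if (r : ℕ) < 2 * g - 3 then (nuPoly g a (p.1.1 : ℕ) (p.1.2 : ℕ) 1).coeff (r : ℕ)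
    else if (r : ℕ) < 2 * (2 * g - 3) then
      (nuPoly g a (p.1.1 : ℕ) (p.1.2 : ℕ) 2).coeff ((r : ℕ) - (2 * g - 3))
    else tauVal g a (p.1.1 : ℕ) (p.1.2 : ℕ) ((r : ℕ) - 2 * (2 * g - 3) + 1)

/-- The parameters `a_{1,h}, …, a_{g−1,h}` (`h = 1,2`) are nonzero and pairwise
distinct. -/
def validParams (g : ℕ) (a : ℕ → ℕ → ℂ) : Prop :=
  ∀ h, h = 1 ∨ h = 2 →
    (∀ i ∈ Finset.Icc 1 (g - 1), a i h ≠ 0) ∧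
      ∀ i ∈ Finset.Icc 1 (g - 1), ∀ j ∈ Finset.Icc 1 (g - 1), i ≠ j → a i h ≠ a j h

/-! The two `α`'s entering `ν_{ik,h}` (resp. `ν_{kj,h}`) share all but one linear factor, and
the common part `Q` comes out of the Wronskian squared: `W(pQ, qQ) = Q² W(p, q)`. What is left is
the Wronskian of two polynomials of degree at most 2, computed explicitly, and evaluating at `a_k`
only needs `Q(a_k)` and `Q'(a_k) = ∑_m ∏_{ℓ ≠ m} (a_k - a_ℓ)`. -/

namespace Polynomial

variable {R : Type*} [CommRing R]

theorem eval_prod_X_sub_C {ι : Type*} (s : Finset ι) (f : ι → R) (t : R) :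
    (∏ i ∈ s, (X - C (f i))).eval t = ∏ i ∈ s, (t - f i) := by
  simp [eval_prod]

theorem eval_derivative_prod_X_sub_C {ι : Type*} [DecidableEq ι] (s : Finset ι) (f : ι → R)
    (t : R) :
    (derivative (∏ i ∈ s, (X - C (f i)))).eval t = ∑ m ∈ s, ∏ i ∈ s.erase m, (t - f i) := by
  simp [derivative_prod_finset, eval_finsetSum, eval_prod]

theorem wronskian_mul_right_mul_right (p q Q : R[X]) :
    wronskian (p * Q) (q * Q) = Q ^ 2 * wronskian p q := by
  simp only [wronskian, derivative_mul]
  ring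

theorem eval_derivative_sq_mul (Q W : R[X]) (t : R) :
    (derivative (Q ^ 2 * W)).eval t =
      Q.eval t * (2 * (derivative Q).eval t * W.eval t + Q.eval t * (derivative W).eval t) := by
  simp only [derivative_mul, derivative_sq, eval_add, eval_mul, eval_pow, eval_C]
  ring

theorem wronskian_X_mul_X_sub_C (u v : R) :
    wronskian (X * (X - C u)) (X * (X - C v)) = C (v - u) * X ^ 2 := by
  simp only [wronskian, derivative_mul, derivative_X, derivative_sub, derivative_C, C_sub]
  ring

/-- Written so that its value `c u (u - w)` at `u`, and the vanishing of its derivative there,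
can be read off. -/
theorem wronskian_X_mul_X_sub_C_C_mul_X_sub_C (w c u : R) :
    wronskian (X * (X - C w)) (C c * (X - C u)) =
      C c * (C (u * (u - w)) - (X - C u) ^ 2) := by
  simp only [wronskian, derivative_mul, derivative_X, derivative_sub, derivative_C, C_sub, C_mul]
  ring

end Polynomial

theorem Finset.prod_erase_eq_mul_prod_erase_erase {ι M : Type*} [DecidableEq ι] [CommMonoid M]
    {s : Finset ι} {i j : ι} (hj : j ∈ s) (hij : i ≠ j) (f : ι → M) :
    ∏ x ∈ s.erase i, f x = f j * ∏ x ∈ (s.erase i).erase j, f x :=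
  (mul_prod_erase _ f (mem_erase.2 ⟨hij.symm, hj⟩)).symm

section

variable {g : ℕ} {a : ℕ → ℕ → ℂ} {i j h : ℕ}

theorem nuPoly_eq_wronskian :
    nuPoly g a i j h = wronskian (alphaPoly g a i h) (alphaPoly g a j h) := by
  rw [nuPoly, wronskian, mul_comm (derivative _)]

theorem alphaPoly_of_le (hi : i ≤ g / 2) (hj : j ∈ Icc 1 (g - 1)) (hij : i ≠ j) :
    alphaPoly g a i h =
      X * (X - C (a j h)) * ∏ ℓ ∈ ((Icc 1 (g - 1)).erase i).erase j, (X - C (a ℓ h)) := by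
  rw [alphaPoly, if_pos hi, prod_erase_eq_mul_prod_erase_erase hj hij, mul_assoc]

theorem alphaPoly_of_lt (hi : g / 2 < i) (hj : j ∈ Icc 1 (g - 1)) (hij : i ≠ j) :
    alphaPoly g a i h =
      C (-(dcoef g a h * a i h / Aprod g a h)) * (X - C (a j h)) *
        ∏ ℓ ∈ ((Icc 1 (g - 1)).erase i).erase j, (X - C (a ℓ h)) := by
  rw [alphaPoly, if_neg hi.not_ge, prod_erase_eq_mul_prod_erase_erase hj hij, mul_assoc]

theorem neg_dcoef_mul_div_Aprod (hh : h = 1 ∨ h = 2) (hA : Aprod g a 1 ≠ 0) (x : ℂ) :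
    -(dcoef g a h * x / Aprod g a h) = (-1) ^ (h + 1) * x / Aprod g a 2 := by
  rcases hh with rfl | rfl
  · rw [dcoef, if_pos rfl]
    field_simp
    ring
  · rw [dcoef, if_neg (by norm_num)]
    ring

theorem Aprod_ne_zero (ha : validParams g a) (hh : h = 1 ∨ h = 2) : Aprod g a h ≠ 0 :=
  prod_ne_zero_iff.2 (ha h hh).1

end

theorem nuPoly_eval_at_node_lower {g : ℕ} {a : ℕ → ℕ → ℂ} {i k : ℕ} (h : ℕ) (hi : 1 ≤ i)
    (hik : i < k) (hk : k ≤ g / 2) :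
    (nuPoly g a i k h).eval (a k h) =
        a k h ^ 2 * (a i h - a k h) *
          ∏ ℓ ∈ ((Icc 1 (g - 1)).erase i).erase k, (a k h - a ℓ h) ^ 2 ∧
      (derivative (nuPoly g a i k h)).eval (a k h) =
        2 * a k h * (a i h - a k h) *
          (∏ ℓ ∈ ((Icc 1 (g - 1)).erase i).erase k, (a k h - a ℓ h)) *
          ((∏ ℓ ∈ ((Icc 1 (g - 1)).erase i).erase k, (a k h - a ℓ h)) +
            a k h * ∑ m ∈ ((Icc 1 (g - 1)).erase i).erase k,
              ∏ ℓ ∈ (((Icc 1 (g - 1)).erase i).erase k).erase m, (a k h - a ℓ h)) := by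
  set Q := ∏ ℓ ∈ ((Icc 1 (g - 1)).erase i).erase k, (X - C (a ℓ h))
  have hαi : alphaPoly g a i h = X * (X - C (a k h)) * Q :=
    alphaPoly_of_le (by omega) (mem_Icc.2 ⟨by omega, by omega⟩) hik.ne
  have hαk : alphaPoly g a k h = X * (X - C (a i h)) * Q := by
    rw [alphaPoly_of_le hk (mem_Icc.2 ⟨hi, by omega⟩) hik.ne', erase_right_comm]
  have hν : nuPoly g a i k h = Q ^ 2 * (C (a i h - a k h) * X ^ 2) := by
    rw [nuPoly_eq_wronskian, hαi, hαk, wronskian_mul_right_mul_right, wronskian_X_mul_X_sub_C]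
  have hW' : (derivative (C (a i h - a k h) * X ^ 2)).eval (a k h) =
      (a i h - a k h) * (2 * a k h) := by
    simp [derivative_sq]
  rw [hν, eval_mul, eval_pow, eval_derivative_sq_mul, eval_derivative_prod_X_sub_C,
    eval_prod_X_sub_C, hW']
  simp only [eval_mul, eval_C, eval_pow, eval_X, prod_pow]
  constructor <;> ring

theorem nuPoly_eval_at_node_upper {g : ℕ} {a : ℕ → ℕ → ℂ} {k j h : ℕ} (hh : h = 1 ∨ h = 2)
    (hA : Aprod g a 1 ≠ 0) (hk : 1 ≤ k) (hkg : k ≤ g / 2) (hj : g / 2 < j) (hjg : j ≤ g - 1) :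
    (nuPoly g a k j h).eval (a k h) =
        (-1 : ℂ) ^ (h + 1) * (a k h * a j h / Aprod g a 2) * (a k h - a j h) *
          ∏ ℓ ∈ ((Icc 1 (g - 1)).erase k).erase j, (a k h - a ℓ h) ^ 2 ∧
      (derivative (nuPoly g a k j h)).eval (a k h) =
        (-1 : ℂ) ^ (h + 1) * (2 * a k h * a j h / Aprod g a 2) * (a k h - a j h) *
          (∏ ℓ ∈ ((Icc 1 (g - 1)).erase k).erase j, (a k h - a ℓ h)) *
          ∑ m ∈ ((Icc 1 (g - 1)).erase k).erase j,
            ∏ ℓ ∈ (((Icc 1 (g - 1)).erase k).erase j).erase m, (a k h - a ℓ h) := by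
  set Q := ∏ ℓ ∈ ((Icc 1 (g - 1)).erase k).erase j, (X - C (a ℓ h))
  set c := (-1 : ℂ) ^ (h + 1) * a j h / Aprod g a 2
  have hαk : alphaPoly g a k h = X * (X - C (a j h)) * Q :=
    alphaPoly_of_le hkg (mem_Icc.2 ⟨by omega, hjg⟩) (by omega)
  have hαj : alphaPoly g a j h = C c * (X - C (a k h)) * Q := by
    rw [alphaPoly_of_lt hj (mem_Icc.2 ⟨hk, by omega⟩) (by omega), erase_right_comm,
      neg_dcoef_mul_div_Aprod hh hA]
  set W := C c * (C (a k h * (a k h - a j h)) - (X - C (a k h)) ^ 2)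
  have hν : nuPoly g a k j h = Q ^ 2 * W := by
    rw [nuPoly_eq_wronskian, hαk, hαj, wronskian_mul_right_mul_right,
      wronskian_X_mul_X_sub_C_C_mul_X_sub_C]
  have hW : W.eval (a k h) = c * (a k h * (a k h - a j h)) := by
    simp [W]
  have hW' : (derivative W).eval (a k h) = 0 := by
    simp [W, derivative_sq]
  rw [hν, eval_mul, eval_pow, eval_derivative_sq_mul, eval_derivative_prod_X_sub_C,
    eval_prod_X_sub_C, hW, hW', prod_pow]
  constructor <;> ring

theorem nuPoly_eval_at_node_even_general (g k : ℕ) (hgk : g = 2 * k)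
    (a : ℕ → ℕ → ℂ) (ha : validParams g a) (h : ℕ) (hh : h = 1 ∨ h = 2) :
    (∀ i, 1 ≤ i → i < k →
      (nuPoly g a i k h).eval (a k h) =
        a k h ^ 2 * (a i h - a k h) *
          ∏ ℓ ∈ ((Finset.Icc 1 (g - 1)).erase i).erase k, (a k h - a ℓ h) ^ 2 ∧
      (derivative (nuPoly g a i k h)).eval (a k h) =
        2 * a k h * (a i h - a k h) *
          (∏ ℓ ∈ ((Finset.Icc 1 (g - 1)).erase i).erase k, (a k h - a ℓ h)) *
          ((∏ ℓ ∈ ((Finset.Icc 1 (g - 1)).erase i).erase k, (a k h - a ℓ h)) +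
            a k h * ∑ m ∈ ((Finset.Icc 1 (g - 1)).erase i).erase k,
              ∏ ℓ ∈ (((Finset.Icc 1 (g - 1)).erase i).erase k).erase m,
                (a k h - a ℓ h))) ∧
    (∀ j, k < j → j ≤ g - 1 →
      (nuPoly g a k j h).eval (a k h) =
        (-1 : ℂ) ^ (h + 1) * (a k h * a j h / Aprod g a 2) * (a k h - a j h) *
          ∏ ℓ ∈ ((Finset.Icc 1 (g - 1)).erase k).erase j, (a k h - a ℓ h) ^ 2 ∧
      (derivative (nuPoly g a k j h)).eval (a k h) =
        (-1 : ℂ) ^ (h + 1) * (2 * a k h * a j h / Aprod g a 2) * (a k h - a j h) *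
          (∏ ℓ ∈ ((Finset.Icc 1 (g - 1)).erase k).erase j, (a k h - a ℓ h)) *
          ∑ m ∈ ((Finset.Icc 1 (g - 1)).erase k).erase j,
            ∏ ℓ ∈ (((Finset.Icc 1 (g - 1)).erase k).erase j).erase m,
              (a k h - a ℓ h)) := by
  have hk : k = g / 2 := by omega
  refine ⟨fun i hi hik => nuPoly_eval_at_node_lower h hi hik hk.le, fun j hkj hjg => ?_⟩
  exact nuPoly_eval_at_node_upper hh (Aprod_ne_zero ha (Or.inl rfl)) (by omega) hk.le (by omega)
    hjg

/-- Let `g = 2k` be even, `h ∈ {1,2}`, `δ_h = (−1)^{h+1}`.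
(i) For `1 ≤ i < k`:
`ν_{ik,h}(a_{k,h}) = a_{k,h}²(a_{i,h} − a_{k,h})∏_{ℓ≠i,k}(a_{k,h} − a_{ℓ,h})²` and
`ν'_{ik,h}(a_{k,h}) = 2a_{k,h}(a_{i,h} − a_{k,h})∏_{ℓ≠i,k}(a_{k,h} − a_{ℓ,h}) ·
(∏_{ℓ≠i,k}(a_{k,h} − a_{ℓ,h}) + a_{k,h}∑_{m≠i,k}∏_{ℓ≠i,k,m}(a_{k,h} − a_{ℓ,h}))`.
(ii) For `k < j ≤ g−1`:
`ν_{kj,h}(a_{k,h}) = δ_h(a_{k,h}a_{j,h}/A_2)(a_{k,h} − a_{j,h})∏_{ℓ≠k,j}(a_{k,h} − a_{ℓ,h})²` and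
`ν'_{kj,h}(a_{k,h}) = δ_h(2a_{k,h}a_{j,h}/A_2)(a_{k,h} − a_{j,h})∏_{ℓ≠k,j}(a_{k,h} − a_{ℓ,h})
· ∑_{m≠k,j}∏_{ℓ≠k,j,m}(a_{k,h} − a_{ℓ,h})`. -/
theorem nuPoly_eval_at_node_even (g k : ℕ) (hgk : g = 2 * k) (hg : 3 ≤ g)
    (a : ℕ → ℕ → ℂ) (ha : validParams g a) (h : ℕ) (hh : h = 1 ∨ h = 2) :
    (∀ i, 1 ≤ i → i < k →
      (nuPoly g a i k h).eval (a k h) =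
        a k h ^ 2 * (a i h - a k h) *
          ∏ ℓ ∈ ((Finset.Icc 1 (g - 1)).erase i).erase k, (a k h - a ℓ h) ^ 2 ∧
      (derivative (nuPoly g a i k h)).eval (a k h) =
        2 * a k h * (a i h - a k h) *
          (∏ ℓ ∈ ((Finset.Icc 1 (g - 1)).erase i).erase k, (a k h - a ℓ h)) *
          ((∏ ℓ ∈ ((Finset.Icc 1 (g - 1)).erase i).erase k, (a k h - a ℓ h)) +
            a k h * ∑ m ∈ ((Finset.Icc 1 (g - 1)).erase i).erase k,
              ∏ ℓ ∈ (((Finset.Icc 1 (g - 1)).erase i).erase k).erase m,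
                (a k h - a ℓ h))) ∧
    (∀ j, k < j → j ≤ g - 1 →
      (nuPoly g a k j h).eval (a k h) =
        (-1 : ℂ) ^ (h + 1) * (a k h * a j h / Aprod g a 2) * (a k h - a j h) *
          ∏ ℓ ∈ ((Finset.Icc 1 (g - 1)).erase k).erase j, (a k h - a ℓ h) ^ 2 ∧
      (derivative (nuPoly g a k j h)).eval (a k h) =
        (-1 : ℂ) ^ (h + 1) * (2 * a k h * a j h / Aprod g a 2) * (a k h - a j h) *
          (∏ ℓ ∈ ((Finset.Icc 1 (g - 1)).erase k).erase j, (a k h - a ℓ h)) *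
          ∑ m ∈ ((Finset.Icc 1 (g - 1)).erase k).erase j,
            ∏ ℓ ∈ (((Finset.Icc 1 (g - 1)).erase k).erase j).erase m,
              (a k h - a ℓ h)) :=
  nuPoly_eval_at_node_even_general g k hgk a ha h hh
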